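/- Let 𝒜[D] be a k-th order homogeneous constant-coefficient operator and ℒ(𝒜)[D] its linearization. Then ℒ(𝒜)[D] is elliptic (real symbol injective for all nonzero ξ ∈ ℝⁿ) if and only if 𝒜[D] is elliptic. -/
import Mathlib

open Finset

private lemma prod_pow_add_single {n : ℕ} (ξ : Fin n → ℝ) (β : Fin n → ℕ) (i : Fin n) :
    (∏ j, ξ j ^ ((β + Pi.single i 1 : Fin n → ℕ)) j) = ξ i * ∏ j, ξ j ^ β j := by
  have h : ∀ j ∈ Finset.univ, ξ j ^ ((β + Pi.single i 1 : Fin n → ℕ) j)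
      = ξ j ^ β j * ξ j ^ ((Pi.single i 1 : Fin n → ℕ) j) := fun j _ => by
    simp [Pi.add_apply, pow_add]
  rw [Finset.prod_congr rfl h, Finset.prod_mul_distrib]
  have h2 : (∏ j, ξ j ^ ((Pi.single i 1 : Fin n → ℕ) j)) = ξ i := by
    rw [Finset.prod_eq_single i]
    · simp
    · intro j _ hj; rw [Pi.single_eq_of_ne hj, pow_zero]
    · simp
  rw [h2, mul_comm]

private lemma sum_add_single {n : ℕ} (β : Fin n → ℕ) (i : Fin n) :
    (∑ j, (β + Pi.single i 1 : Fin n → ℕ) j) = (∑ j, β j) + 1 := by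
  simp [Pi.add_apply, Finset.sum_add_distrib, Pi.single_apply]

private lemma symbolL {n k : ℕ} (hk : 1 ≤ k) {V W : Type*}
    [AddCommGroup V] [Module ℝ V] [AddCommGroup W] [Module ℝ W]
    (A : (Fin n → ℕ) → (V →ₗ[ℝ] W)) (ξ : Fin n → ℝ) (v : V) :
    (∑ i : Fin n, ∑ β ∈ Finset.Nat.antidiagonalTuple n (k - 1),
        (ξ i * (((β i + 1 : ℕ) : ℝ) / (k : ℝ))) • A (β + Pi.single i 1) ((∏ j, ξ j ^ β j) • v))
    = ∑ α ∈ Finset.Nat.antidiagonalTuple n k, (∏ j, ξ j ^ α j) • A α v := by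
  have hk0 : (k : ℝ) ≠ 0 := Nat.cast_ne_zero.mpr (by omega)
  have hRHS : ∀ α ∈ Finset.Nat.antidiagonalTuple n k,
      (∏ j, ξ j ^ α j) • A α v
        = ∑ i : Fin n, (((α i : ℝ) / (k : ℝ)) * ∏ j, ξ j ^ α j) • A α v := by
    intro α hα
    rw [Finset.Nat.mem_antidiagonalTuple] at hα
    have h1 : (∑ i : Fin n, ((α i : ℝ) / (k : ℝ))) = 1 := by
      rw [← Finset.sum_div]
      have : (∑ i : Fin n, ((α i : ℕ) : ℝ)) = (k : ℝ) := by exact_mod_cast hα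
      rw [this]
      exact div_self hk0
    rw [← Finset.sum_smul, ← Finset.sum_mul, h1, one_mul]
  have e1 : (∑ α ∈ Finset.Nat.antidiagonalTuple n k, (∏ j, ξ j ^ α j) • A α v)
      = ∑ i : Fin n, ∑ α ∈ Finset.Nat.antidiagonalTuple n k,
          (((α i : ℝ) / (k : ℝ)) * ∏ j, ξ j ^ α j) • A α v :=
    (Finset.sum_congr rfl hRHS).trans Finset.sum_comm
  rw [e1]
  refine Finset.sum_congr rfl (fun i _ => ?_)
  have e2 : (∑ α ∈ (Finset.Nat.antidiagonalTuple n k).filter (fun α => α i ≠ 0),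
        (((α i : ℝ) / (k : ℝ)) * ∏ j, ξ j ^ α j) • A α v)
      = ∑ α ∈ Finset.Nat.antidiagonalTuple n k,
          (((α i : ℝ) / (k : ℝ)) * ∏ j, ξ j ^ α j) • A α v := by
    refine Finset.sum_filter_of_ne ?_
    intro α _ h
    by_contra h0
    exact h (by simp [h0])
  rw [← e2]
  refine Finset.sum_nbij' (fun β => β + Pi.single i 1) (fun α => α - Pi.single i 1)
    ?_ ?_ ?_ ?_ ?_
  · intro β hβ
    rw [Finset.Nat.mem_antidiagonalTuple] at hβ
    simp only [Finset.mem_filter, Finset.Nat.mem_antidiagonalTuple]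
    refine ⟨by rw [sum_add_single]; omega, ?_⟩
    simp [Pi.add_apply]
  · intro α hα
    simp only [Finset.mem_filter, Finset.Nat.mem_antidiagonalTuple] at hα
    obtain ⟨hα1, hα2⟩ := hα
    have hαi : 1 ≤ α i := Nat.one_le_iff_ne_zero.mpr hα2
    rw [Finset.Nat.mem_antidiagonalTuple]
    have h := sum_add_single (α - Pi.single i 1) i
    rw [show ((α - Pi.single i 1) + Pi.single i 1 : Fin n → ℕ) = α by
      funext l
      rcases eq_or_ne l i with rfl | hl
      · simp only [Pi.add_apply, Pi.sub_apply, Pi.single_eq_same]; omega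
      · simp [Pi.single_eq_of_ne hl]] at h
    omega
  · intro β _
    funext l
    rcases eq_or_ne l i with rfl | hl
    · simp only [Pi.add_apply, Pi.sub_apply, Pi.single_eq_same]; omega
    · simp [Pi.single_eq_of_ne hl]
  · intro α hα
    simp only [Finset.mem_filter] at hα
    have hαi : 1 ≤ α i := Nat.one_le_iff_ne_zero.mpr hα.2
    funext l
    rcases eq_or_ne l i with rfl | hl
    · simp only [Pi.add_apply, Pi.sub_apply, Pi.single_eq_same]; omega
    · simp [Pi.single_eq_of_ne hl]
  · intro β hβ
    rw [Finset.Nat.mem_antidiagonalTuple] at hβ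
    rw [map_smul, smul_smul, prod_pow_add_single]
    congr 1
    simp only [Pi.add_apply, Pi.single_eq_same]
    push_cast
    ring

private lemma keyK {n k : ℕ} {V : Type*} [AddCommGroup V] [Module ℝ V]
    (ξ : Fin n → ℝ) (F : (Fin n → ℕ) → V) (i0 : Fin n)
    (hcurl : ∀ i ℓ : Fin n, ∀ β : Fin n → ℕ, (∑ j, β j) + 2 = k →
        ξ i • F (β + Pi.single ℓ 1) = ξ ℓ • F (β + Pi.single i 1)) :
    ∀ m : ℕ, ∀ β : Fin n → ℕ, (∑ j, β j) + 1 = k →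
      (∑ j ∈ Finset.univ.erase i0, β j) = m →
      (ξ i0) ^ m • F β
        = (∏ j ∈ Finset.univ.erase i0, ξ j ^ β j) • F (Pi.single i0 (k - 1)) := by
  intro m
  induction m with
  | zero =>
    intro β hβ hm
    have hz : ∀ j ∈ Finset.univ.erase i0, β j = 0 :=
      (Finset.sum_eq_zero_iff).mp hm
    have hβeq : β = Pi.single i0 (k - 1) := by
      funext l
      rcases eq_or_ne l i0 with rfl | hl
      · rw [Pi.single_eq_same]
        have := Finset.add_sum_erase Finset.univ β (Finset.mem_univ l)
        omega
      · rw [Pi.single_eq_of_ne hl]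
        exact hz l (Finset.mem_erase.mpr ⟨hl, Finset.mem_univ l⟩)
    rw [hβeq, pow_zero, one_smul]
    have hprod : (∏ j ∈ Finset.univ.erase i0, ξ j ^ (Pi.single i0 (k - 1) : Fin n → ℕ) j) = 1 :=
      Finset.prod_eq_one (fun l hl => by
        rw [Pi.single_eq_of_ne (Finset.mem_erase.mp hl).1, pow_zero])
    rw [hprod, one_smul]
  | succ m ih =>
    intro β hβ hm
    have hne : (∑ j ∈ Finset.univ.erase i0, β j) ≠ 0 := by omega
    obtain ⟨j, hjmem, hj0⟩ := Finset.exists_ne_zero_of_sum_ne_zero hne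
    have hji0 : j ≠ i0 := (Finset.mem_erase.mp hjmem).1
    have hj1 : 1 ≤ β j := Nat.one_le_iff_ne_zero.mpr hj0
    set β'' : Fin n → ℕ := Function.update β j (β j - 1) with hβ''
    have hβdec : β = β'' + Pi.single j 1 := by
      funext l
      rcases eq_or_ne l j with rfl | hl
      · simp only [Pi.add_apply, hβ'', Function.update_self, Pi.single_eq_same]; omega
      · simp [hβ'', Function.update_of_ne hl, Pi.single_eq_of_ne hl]
    have hsum'' : (∑ l, β'' l) + 2 = k := by
      have h1 : (∑ l, β'' l) = (β j - 1) + ∑ l ∈ Finset.univ.erase j, β l := by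
        rw [hβ'', Finset.sum_update_of_mem (Finset.mem_univ j),
          Finset.sdiff_singleton_eq_erase]
      have h2 : β j + ∑ l ∈ Finset.univ.erase j, β l = ∑ l, β l :=
        Finset.add_sum_erase Finset.univ β (Finset.mem_univ j)
      omega
    set γ : Fin n → ℕ := β'' + Pi.single i0 1 with hγ
    have hγβ'' : ∀ l, l ≠ i0 → γ l = β'' l := by
      intro l hl
      simp [hγ, Pi.single_eq_of_ne hl]
    have hγsum : (∑ l, γ l) + 1 = k := by rw [hγ, sum_add_single]; omega
    have hγm : (∑ l ∈ Finset.univ.erase i0, γ l) = m := by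
      have e1 : (∑ l ∈ Finset.univ.erase i0, γ l) = ∑ l ∈ Finset.univ.erase i0, β'' l :=
        Finset.sum_congr rfl (fun l hl => hγβ'' l (Finset.mem_erase.mp hl).1)
      have e2 : (∑ l ∈ Finset.univ.erase i0, β'' l)
          = (β j - 1) + ∑ l ∈ (Finset.univ.erase i0).erase j, β l := by
        rw [hβ'', Finset.sum_update_of_mem hjmem, Finset.sdiff_singleton_eq_erase]
      have e3 : β j + ∑ l ∈ (Finset.univ.erase i0).erase j, β l
          = ∑ l ∈ Finset.univ.erase i0, β l := Finset.add_sum_erase _ β hjmem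
      omega
    have hcurl' : ξ i0 • F β = ξ j • F γ := by
      rw [hβdec]
      exact hcurl i0 j β'' hsum''
    have hIH := ih γ hγsum hγm
    calc (ξ i0) ^ (m + 1) • F β = (ξ i0) ^ m • (ξ i0 • F β) := by
          rw [pow_succ, mul_smul]
      _ = (ξ i0) ^ m • (ξ j • F γ) := by rw [hcurl']
      _ = ξ j • ((ξ i0) ^ m • F γ) := smul_comm _ _ _
      _ = (ξ j * ∏ l ∈ Finset.univ.erase i0, ξ l ^ γ l) • F (Pi.single i0 (k - 1)) := by
          rw [hIH, smul_smul]
      _ = (∏ l ∈ Finset.univ.erase i0, ξ l ^ β l) • F (Pi.single i0 (k - 1)) := by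
          congr 1
          have e1 : (∏ l ∈ Finset.univ.erase i0, ξ l ^ γ l)
              = ∏ l ∈ Finset.univ.erase i0, ξ l ^ β'' l :=
            Finset.prod_congr rfl (fun l hl => by rw [hγβ'' l (Finset.mem_erase.mp hl).1])
          have e2 : (∏ l ∈ Finset.univ.erase i0, ξ l ^ β'' l)
              = ξ j ^ (β j - 1) * ∏ l ∈ (Finset.univ.erase i0).erase j, ξ l ^ β l := by
            rw [← Finset.mul_prod_erase _ (fun l => ξ l ^ β'' l) hjmem]
            congr 1
            · rw [hβ'', Function.update_self]
            · exact Finset.prod_congr rfl (fun l hl => by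
                rw [hβ'', Function.update_of_ne (Finset.mem_erase.mp hl).1])
          have e3 : ξ j ^ (β j) * ∏ l ∈ (Finset.univ.erase i0).erase j, ξ l ^ β l
              = ∏ l ∈ Finset.univ.erase i0, ξ l ^ β l := Finset.mul_prod_erase _ (fun l => ξ l ^ β l) hjmem
          rw [e1, e2, ← e3, ← mul_assoc, ← pow_succ']
          congr 2
          omega

/-- **Ellipticity of the linearization.** The linearized operator
`ℒ(𝒜) = 𝒜̃ ⊕ curl_{k−1}` (acting on fields with values in `V ⊙^{k−1} ℝⁿ`, represented by
multi-index coefficients `F_β`, `|β| = k−1`) is elliptic (real symbol injective for all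
nonzero real `ξ`) if and only if the `k`-th order operator `𝒜 = Σ_{|α|=k} A_α ∂^α` is
elliptic.  Ellipticity of `ℒ(𝒜)` is expressed as triviality of the real kernel of its
symbol: whenever `𝔸̃(ξ)F = 0` and `F` satisfies the curl symbol relations at `ξ`, then
`F_β = 0` for all `|β| = k−1`. -/
theorem stmt7 (n k : ℕ) (hk : 1 ≤ k) (V W : Type*)
    [AddCommGroup V] [Module ℝ V] [FiniteDimensional ℝ V]
    [AddCommGroup W] [Module ℝ W]
    (A : (Fin n → ℕ) → (V →ₗ[ℝ] W))
    (hA : ∀ α : Fin n → ℕ, (∑ i, α i) ≠ k → A α = 0) :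
    (∀ ξ : Fin n → ℝ, ξ ≠ 0 → ∀ F : (Fin n → ℕ) → V,
        (∑ i : Fin n, ∑ β ∈ Finset.Nat.antidiagonalTuple n (k - 1),
            (ξ i * (((β i + 1 : ℕ) : ℝ) / (k : ℝ))) • A (β + Pi.single i 1) (F β)) = 0 →
        (∀ i ℓ : Fin n, ∀ β : Fin n → ℕ, (∑ j, β j) + 2 = k →
            ξ i • F (β + Pi.single ℓ 1) = ξ ℓ • F (β + Pi.single i 1)) →
        ∀ β : Fin n → ℕ, (∑ j, β j) + 1 = k → F β = 0)
    ↔ (∀ ξ : Fin n → ℝ, ξ ≠ 0 → ∀ v : V,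
        (∑ α ∈ Finset.Nat.antidiagonalTuple n k, (∏ j, ξ j ^ α j) • A α v) = 0 → v = 0) := by
  constructor
  · intro hLin ξ hξ v hv
    obtain ⟨i0, hi0⟩ := Function.ne_iff.mp hξ
    rw [Pi.zero_apply] at hi0
    have hmem : (∑ j, (Pi.single i0 (k - 1) : Fin n → ℕ) j) + 1 = k := by
      rw [Finset.sum_pi_single']
      simp only [Finset.mem_univ, if_true]
      omega
    have h := hLin ξ hξ (fun β => (∏ j, ξ j ^ β j) • v)
      ((symbolL hk A ξ v).trans hv)
      (by
        intro i ℓ β hβ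
        simp only [prod_pow_add_single, smul_smul]
        congr 1
        ring)
      (Pi.single i0 (k - 1)) hmem
    have hprod : (∏ j, ξ j ^ (Pi.single i0 (k - 1) : Fin n → ℕ) j) = ξ i0 ^ (k - 1) := by
      rw [Finset.prod_eq_single i0]
      · rw [Pi.single_eq_same]
      · intro l _ hl; rw [Pi.single_eq_of_ne hl, pow_zero]
      · simp
    rw [hprod] at h
    rcases smul_eq_zero.mp h with h' | h'
    · exact absurd h' (pow_ne_zero _ hi0)
    · exact h'
  · intro hEll ξ hξ F hsym hcurl β hβ
    obtain ⟨i0, hi0⟩ := Function.ne_iff.mp hξ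
    rw [Pi.zero_apply] at hi0
    set v := F (Pi.single i0 (k - 1)) with hv
    have hK : ∀ β' : Fin n → ℕ, (∑ j, β' j) + 1 = k →
        (ξ i0) ^ (k - 1) • F β' = (∏ j, ξ j ^ β' j) • v := by
      intro β' hβ'
      have hsplit : β' i0 + ∑ j ∈ Finset.univ.erase i0, β' j = ∑ j, β' j :=
        Finset.add_sum_erase Finset.univ β' (Finset.mem_univ i0)
      have h := keyK ξ F i0 hcurl (∑ j ∈ Finset.univ.erase i0, β' j) β' hβ' rfl
      calc (ξ i0) ^ (k - 1) • F β'
          = (ξ i0) ^ (β' i0) • ((ξ i0) ^ (∑ j ∈ Finset.univ.erase i0, β' j) • F β') := by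
            rw [smul_smul, ← pow_add]
            congr 2
            omega
        _ = (ξ i0) ^ (β' i0) • ((∏ j ∈ Finset.univ.erase i0, ξ j ^ β' j) • v) := by rw [h]
        _ = (∏ j, ξ j ^ β' j) • v := by
            rw [smul_smul, Finset.mul_prod_erase Finset.univ (fun j => ξ j ^ β' j)
              (Finset.mem_univ i0)]
    have hv0 : v = 0 := by
      apply hEll ξ hξ
      rw [← symbolL hk A ξ v]
      have e : ∀ i : Fin n, ∀ β' ∈ Finset.Nat.antidiagonalTuple n (k - 1),
          (ξ i * (((β' i + 1 : ℕ) : ℝ) / (k : ℝ))) • A (β' + Pi.single i 1)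
            ((∏ j, ξ j ^ β' j) • v)
          = (ξ i0) ^ (k - 1) •
              ((ξ i * (((β' i + 1 : ℕ) : ℝ) / (k : ℝ))) • A (β' + Pi.single i 1) (F β')) := by
        intro i β' hβ'
        rw [Finset.Nat.mem_antidiagonalTuple] at hβ'
        rw [← hK β' (by omega), map_smul, smul_comm]
      calc (∑ i : Fin n, ∑ β' ∈ Finset.Nat.antidiagonalTuple n (k - 1),
              (ξ i * (((β' i + 1 : ℕ) : ℝ) / (k : ℝ))) • A (β' + Pi.single i 1)
                ((∏ j, ξ j ^ β' j) • v))
          = ∑ i : Fin n, ∑ β' ∈ Finset.Nat.antidiagonalTuple n (k - 1),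
              (ξ i0) ^ (k - 1) •
                ((ξ i * (((β' i + 1 : ℕ) : ℝ) / (k : ℝ))) • A (β' + Pi.single i 1) (F β')) :=
            Finset.sum_congr rfl (fun i _ => Finset.sum_congr rfl (e i))
        _ = (ξ i0) ^ (k - 1) • (∑ i : Fin n, ∑ β' ∈ Finset.Nat.antidiagonalTuple n (k - 1),
              (ξ i * (((β' i + 1 : ℕ) : ℝ) / (k : ℝ))) • A (β' + Pi.single i 1) (F β')) := by
            rw [Finset.smul_sum]
            exact Finset.sum_congr rfl (fun i _ => (Finset.smul_sum).symm)
        _ = 0 := by rw [hsym, smul_zero]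
    have h := hK β hβ
    rw [hv0, smul_zero] at h
    rcases smul_eq_zero.mp h with h' | h'
    · exact absurd h' (pow_ne_zero _ hi0)
    · exact h'
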